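/- arXiv:2012.04436 — 2 statements merged into one kernel-verified Lean document; each statement's English description precedes it below -/
import Mathlib

section
/- Let F be L-smooth and μ-strongly convex with minimizer ξ*, λ ∈ (0, 1/L], and ν ∈ ℕ. Then ν steps of gradient descent x_{k+1} = x_k - λ∇F(x_k) satisfy F(x_ν) - F(ξ*) ≤ (1 - μλ)^ν · (F(x_0) - F(ξ*)). -/
/-!
Smoothness at a gradient step gives the sufficient decrease
`F (x - λ ∇F x) ≤ F x - λ/2 ‖∇F x‖²` once `Lλ ≤ 1`, and minimizing the strong-convexity lower
bound over `y` gives the Polyak–Łojasiewicz inequality `2μ (F x - F ξ) ≤ ‖∇F x‖²`. Together they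
contract the gap by `1 - μλ` per step, a nonnegative factor since `μλ ≤ Lλ ≤ 1`.
-/

section GradientDescent

variable {E : Type*} [NormedAddCommGroup E] [InnerProductSpace ℝ E] {F : E → ℝ} {g : E → E}

theorem polyak_lojasiewicz_of_strongly_convex {μ : ℝ} (hμ : 0 < μ)
    (hsc : ∀ x y, F x + inner ℝ (g x) (y - x) + μ / 2 * ‖y - x‖ ^ 2 ≤ F y) (x y : E) :
    2 * μ * (F x - F y) ≤ ‖g x‖ ^ 2 := by
  have hsq : 0 ≤ ‖μ • (y - x) + g x‖ ^ 2 := sq_nonneg _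
  rw [norm_add_sq_real, real_inner_smul_left, norm_smul, Real.norm_eq_abs, abs_of_pos hμ,
    real_inner_comm] at hsq
  nlinarith [mul_le_mul_of_nonneg_left (hsc x y) hμ.le]

theorem le_sub_half_norm_sq_of_smooth {L lam : ℝ}
    (hsm : ∀ x y, F y ≤ F x + inner ℝ (g x) (y - x) + L / 2 * ‖y - x‖ ^ 2)
    (hlam0 : 0 ≤ lam) (hLlam : L * lam ≤ 1) (x : E) :
    F (x - lam • g x) ≤ F x - lam / 2 * ‖g x‖ ^ 2 := by
  have h := hsm x (x - lam • g x)
  rw [sub_sub_cancel_left, inner_neg_right, real_inner_smul_right, real_inner_self_eq_norm_sq,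
    norm_neg, norm_smul, Real.norm_eq_abs, abs_of_nonneg hlam0] at h
  nlinarith [mul_nonneg (mul_nonneg hlam0 (sub_nonneg.2 hLlam)) (sq_nonneg ‖g x‖)]

theorem gradient_step_sub_le_mul_sub {μ L lam : ℝ} (hμ : 0 < μ)
    (hsm : ∀ x y, F y ≤ F x + inner ℝ (g x) (y - x) + L / 2 * ‖y - x‖ ^ 2)
    (hsc : ∀ x y, F x + inner ℝ (g x) (y - x) + μ / 2 * ‖y - x‖ ^ 2 ≤ F y)
    (hlam0 : 0 ≤ lam) (hLlam : L * lam ≤ 1) (x ξ : E) :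
    F (x - lam • g x) - F ξ ≤ (1 - μ * lam) * (F x - F ξ) := by
  have hdescent := le_sub_half_norm_sq_of_smooth hsm hlam0 hLlam x
  have hPL := polyak_lojasiewicz_of_strongly_convex hμ hsc x ξ
  nlinarith [mul_le_mul_of_nonneg_left hPL (div_nonneg hlam0 zero_le_two)]

end GradientDescent

theorem gd_multi_step_contraction_general {d : ℕ} (F : EuclideanSpace ℝ (Fin d) → ℝ)
    (g : EuclideanSpace ℝ (Fin d) → EuclideanSpace ℝ (Fin d)) (μ L lam : ℝ)
    (hμ : 0 < μ) (hμL : μ ≤ L)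
    (hsm : ∀ x y, F y ≤ F x + (inner ℝ (g x) (y - x) : ℝ) + L / 2 * ‖y - x‖ ^ 2)
    (hsc : ∀ x y, F x + (inner ℝ (g x) (y - x) : ℝ) + μ / 2 * ‖y - x‖ ^ 2 ≤ F y)
    (ξ : EuclideanSpace ℝ (Fin d))
    (hlam0 : 0 < lam) (hlam : lam ≤ 1 / L)
    (x : ℕ → EuclideanSpace ℝ (Fin d)) (hx : ∀ k, x (k + 1) = x k - lam • g (x k))
    (ν : ℕ) :
    F (x ν) - F ξ ≤ (1 - μ * lam) ^ ν * (F (x 0) - F ξ) := by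
  have hLlam : L * lam ≤ 1 := by
    rwa [le_div_iff₀ (hμ.trans_le hμL), mul_comm] at hlam
  have hfactor : 0 ≤ 1 - μ * lam := by
    nlinarith [mul_le_mul_of_nonneg_right hμL hlam0.le]
  refine le_geom (u := fun k => F (x k) - F ξ) hfactor ν fun k _ => ?_
  simpa only [hx k] using gradient_step_sub_le_mul_sub hμ hsm hsc hlam0.le hLlam (x k) ξ

/-- ν steps of gradient descent with step size 0 < λ ≤ 1/L on an L-smooth, μ-strongly convex
function contract the optimality gap by (1 - μλ)^ν. -/
theorem gd_multi_step_contraction {d : ℕ} (F : EuclideanSpace ℝ (Fin d) → ℝ)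
    (g : EuclideanSpace ℝ (Fin d) → EuclideanSpace ℝ (Fin d)) (μ L lam : ℝ)
    (hμ : 0 < μ) (hμL : μ ≤ L)
    (hsm : ∀ x y, F y ≤ F x + (inner ℝ (g x) (y - x) : ℝ) + L / 2 * ‖y - x‖ ^ 2)
    (hsc : ∀ x y, F x + (inner ℝ (g x) (y - x) : ℝ) + μ / 2 * ‖y - x‖ ^ 2 ≤ F y)
    (ξ : EuclideanSpace ℝ (Fin d)) (hξmin : ∀ y, F ξ ≤ F y) (hξgrad : g ξ = 0)
    (hlam0 : 0 < lam) (hlam : lam ≤ 1 / L)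
    (x : ℕ → EuclideanSpace ℝ (Fin d)) (hx : ∀ k, x (k + 1) = x k - lam • g (x k))
    (ν : ℕ) :
    F (x ν) - F ξ ≤ (1 - μ * lam) ^ ν * (F (x 0) - F ξ) :=
  gd_multi_step_contraction_general F g μ L lam hμ hμL hsm hsc ξ hlam0 hlam x hx ν
end

section
/- For the one-dimensional Gaussian mechanism M(x) = f(x) + N(0, σ²) with |f(x) − f(x')| ≤ Δ for all x, x', and any ε ∈ (0,1): if σ ≥ (Δ/ε)·√(2·ln(1.25/δ)) with δ ∈ (0,1), then for every measurable set E, Pr[M(x) ∈ E] ≤ e^ε · Pr[M(x') ∈ E] + δ. -/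
/-! The privacy loss `log (p_a t / p_b t) = (a - b)(2t - a - b) / (2σ²)` of the densities of
`N(a, σ²)` and `N(b, σ²)` is affine in `t`. Off the event where it exceeds `ε` the density `p_a`
is at most `e^ε p_b`, so `P_a(E) ≤ e^ε P_b(E) + P_a(loss > ε)`. Under `N(a, σ²)` the loss is
Gaussian, and the calibration of `σ` makes the bad event a standard normal tail `{Z > w}` with
`w ≥ c - ε / (2c)`, `c = √(2 log (1.25 / δ))`. For `w ≥ 0`, comparing with the density shifted
by `w` gives `P(Z > w) ≤ e^{-w²/2} / 2 ≤ e^{ε/2} δ / 2.5 ≤ δ`. For `w < 0` one has `δ > 15/16`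
and `w > -1/5`, and bounding the density by its maximum gives `P(Z > w) ≤ 1/2 + |w| / √(2π)`. -/

open MeasureTheory ProbabilityTheory Set Real
open scoped NNReal ENNReal

theorem measure_le_mul_add_of_restrict_compl_le {α : Type*} [MeasurableSpace α]
    {μ ν : Measure α} {c : ℝ≥0∞} {S : Set α} (h : μ.restrict Sᶜ ≤ c • ν) (E : Set α) :
    μ E ≤ c * ν E + μ S :=
  calc μ E ≤ μ (E ∩ Sᶜ) + μ (E ∩ S) := by
        rw [add_comm]; exact measure_le_inter_add_sdiff μ E S
    _ ≤ c * ν E + μ S := by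
        gcongr
        · exact (Measure.le_restrict_apply _ _).trans (h E)
        · exact inter_subset_right

theorem withDensity_restrict_le_smul {α : Type*} [MeasurableSpace α] {μ : Measure α}
    {f g : α → ℝ≥0∞} (hg : Measurable g) {c : ℝ≥0∞} {s : Set α} (hs : MeasurableSet s)
    (h : ∀ x ∈ s, f x ≤ c * g x) :
    (μ.withDensity f).restrict s ≤ c • μ.withDensity g := by
  rw [← withDensity_smul c hg]
  calc (μ.withDensity f).restrict s ≤ (μ.withDensity (c • g)).restrict s := by
        rw [restrict_withDensity hs, restrict_withDensity hs]
        exact withDensity_mono ((ae_restrict_iff' hs).2 (ae_of_all _ h))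
    _ ≤ μ.withDensity (c • g) := Measure.restrict_le_self

/-- The privacy loss `log (gaussianPDFReal a v t / gaussianPDFReal b v t)` of observing `t`. -/
noncomputable def gaussianPrivacyLoss (a b : ℝ) (v : ℝ≥0) (t : ℝ) : ℝ :=
  (a - b) * (2 * t - a - b) / (2 * v)

theorem gaussianPDFReal_eq_exp_privacyLoss_mul (a b : ℝ) (v : ℝ≥0) (t : ℝ) :
    gaussianPDFReal a v t = exp (gaussianPrivacyLoss a b v t) * gaussianPDFReal b v t := by
  rw [gaussianPDFReal, gaussianPDFReal, mul_left_comm, ← exp_add, gaussianPrivacyLoss]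
  congr 2
  ring

theorem gaussianReal_restrict_le_smul {a b ε : ℝ} {v : ℝ≥0} (hv : v ≠ 0) {s : Set ℝ}
    (hs : MeasurableSet s) (h : ∀ t ∈ s, gaussianPrivacyLoss a b v t ≤ ε) :
    (gaussianReal a v).restrict s ≤ ENNReal.ofReal (exp ε) • gaussianReal b v := by
  rw [gaussianReal_of_var_ne_zero _ hv, gaussianReal_of_var_ne_zero _ hv]
  refine withDensity_restrict_le_smul (measurable_gaussianPDF _ _) hs fun t ht ↦ ?_
  rw [gaussianPDF, gaussianPDF, ← ENNReal.ofReal_mul (exp_pos ε).le,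
    gaussianPDFReal_eq_exp_privacyLoss_mul a b]
  gcongr
  · exact gaussianPDFReal_nonneg _ _ _
  · exact h t ht

theorem gaussianReal_le_exp_mul_add_privacyLoss (a b ε : ℝ) {v : ℝ≥0} (hv : v ≠ 0)
    (E : Set ℝ) :
    gaussianReal a v E ≤ ENNReal.ofReal (exp ε) * gaussianReal b v E +
      gaussianReal a v {t | ε < gaussianPrivacyLoss a b v t} := by
  refine measure_le_mul_add_of_restrict_compl_le ?_ E
  simp only [compl_ofPred, not_lt]
  have hmeas : Measurable (gaussianPrivacyLoss a b v) := by unfold gaussianPrivacyLoss; fun_prop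
  exact gaussianReal_restrict_le_smul hv (measurableSet_le hmeas measurable_const) fun _ ↦ id

theorem gaussianReal_privacyLoss_gt_eq (a b ε : ℝ) {v : ℝ≥0} (hv : v ≠ 0) :
    gaussianReal a v {t | ε < gaussianPrivacyLoss a b v t} =
      gaussianReal 0 (NNReal.mk ((a - b) ^ 2) (sq_nonneg _) * v)
        (Ioi (v * ε - (a - b) ^ 2 / 2)) := by
  have hlaw : (gaussianReal a v).map (fun t ↦ (a - b) * (t - a)) =
      gaussianReal 0 (NNReal.mk ((a - b) ^ 2) (sq_nonneg _) * v) := by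
    rw [show (fun t ↦ (a - b) * (t - a)) = ((a - b) * ·) ∘ (· - a) from rfl,
      ← Measure.map_map (by fun_prop) (by fun_prop), gaussianReal_map_sub_const,
      gaussianReal_map_const_mul, sub_self, mul_zero]
  have hset : {t | ε < gaussianPrivacyLoss a b v t} =
      (fun t ↦ (a - b) * (t - a)) ⁻¹' Ioi (v * ε - (a - b) ^ 2 / 2) := by
    have hv' : (0 : ℝ) < 2 * v := by positivity
    ext t
    simp only [mem_ofPred_eq, mem_preimage, mem_Ioi, gaussianPrivacyLoss, lt_div_iff₀ hv']
    constructor <;> intro h <;> linarith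
  rw [hset, ← Measure.map_apply (by fun_prop) measurableSet_Ioi, hlaw]

theorem gaussianReal_Ioi_self_le_half (m : ℝ) (v : ℝ≥0) : gaussianReal m v (Ioi m) ≤ 2⁻¹ := by
  have hsymm : gaussianReal m v (Iio m) = gaussianReal m v (Ioi m) := by
    have hmap : (gaussianReal m v).map (2 * m - ·) = gaussianReal m v := by
      rw [gaussianReal_map_const_sub]; ring_nf
    conv_lhs => rw [← hmap]
    rw [Measure.map_apply (by fun_prop) measurableSet_Iio]
    congr 1
    ext t
    simp only [mem_preimage, mem_Iio, mem_Ioi]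
    constructor <;> intro h <;> linarith
  have hsum : gaussianReal m v (Iio m) + gaussianReal m v (Ioi m) ≤ 1 := by
    rw [← measure_union (Iio_disjoint_Ioi_of_le le_rfl) measurableSet_Ioi]
    exact prob_le_one
  rw [hsymm, ← two_mul] at hsum
  rw [ENNReal.le_inv_iff_mul_le, mul_comm]
  exact hsum

theorem gaussianReal_Ioi_add_le_exp {u : ℝ} (hu : 0 ≤ u) (m : ℝ) {v : ℝ≥0} (hv : v ≠ 0) :
    gaussianReal m v (Ioi (m + u)) ≤ ENNReal.ofReal (exp (-u ^ 2 / (2 * v)) / 2) := by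
  have hloss : ∀ t ∈ Ioi (m + u), gaussianPrivacyLoss m (m + u) v t ≤ -u ^ 2 / (2 * v) := by
    intro t ht
    rw [mem_Ioi] at ht
    unfold gaussianPrivacyLoss
    gcongr
    nlinarith
  calc gaussianReal m v (Ioi (m + u))
      = (gaussianReal m v).restrict (Ioi (m + u)) (Ioi (m + u)) :=
        (Measure.restrict_apply_self _ _).symm
    _ ≤ ENNReal.ofReal (exp (-u ^ 2 / (2 * v))) * gaussianReal (m + u) v (Ioi (m + u)) :=
        gaussianReal_restrict_le_smul hv measurableSet_Ioi hloss _
    _ ≤ ENNReal.ofReal (exp (-u ^ 2 / (2 * v))) * 2⁻¹ := by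
        gcongr; exact gaussianReal_Ioi_self_le_half _ _
    _ = ENNReal.ofReal (exp (-u ^ 2 / (2 * v)) / 2) := by
        rw [ENNReal.ofReal_div_of_pos two_pos, ENNReal.ofReal_ofNat, ENNReal.div_eq_inv_mul,
          mul_comm]

theorem gaussianPDFReal_le_inv_sqrt (m : ℝ) (v : ℝ≥0) (t : ℝ) :
    gaussianPDFReal m v t ≤ (√(2 * π * v))⁻¹ := by
  rw [gaussianPDFReal]
  refine mul_le_of_le_one_right (by positivity) (exp_le_one_iff.2 ?_)
  exact div_nonpos_of_nonpos_of_nonneg (neg_nonpos.2 (sq_nonneg _)) (by positivity)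

theorem gaussianReal_Ioi_add_le_half_add {u : ℝ} (hu : u ≤ 0) (m : ℝ) {v : ℝ≥0} (hv : v ≠ 0) :
    gaussianReal m v (Ioi (m + u)) ≤ ENNReal.ofReal (1 / 2 + -u / √(2 * π * v)) := by
  have hIoc : gaussianReal m v (Ioc (m + u) m) ≤ ENNReal.ofReal (-u / √(2 * π * v)) :=
    calc gaussianReal m v (Ioc (m + u) m)
        = ∫⁻ t in Ioc (m + u) m, gaussianPDF m v t := gaussianReal_apply _ hv _
      _ ≤ ∫⁻ _ in Ioc (m + u) m, ENNReal.ofReal (√(2 * π * v))⁻¹ :=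
        lintegral_mono fun t ↦ ENNReal.ofReal_le_ofReal (gaussianPDFReal_le_inv_sqrt m v t)
      _ = ENNReal.ofReal (-u / √(2 * π * v)) := by
        rw [setLIntegral_const, Real.volume_Ioc, ← ENNReal.ofReal_mul (by positivity)]
        congr 1; ring
  calc gaussianReal m v (Ioi (m + u))
      ≤ gaussianReal m v (Ioc (m + u) m) + gaussianReal m v (Ioi m) := by
        rw [← Ioc_union_Ioi_eq_Ioi (by linarith : m + u ≤ m)]
        exact measure_union_le _ _
    _ ≤ ENNReal.ofReal (-u / √(2 * π * v)) + ENNReal.ofReal (1 / 2) := by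
        gcongr
        rw [one_div, ENNReal.ofReal_inv_of_pos two_pos, ENNReal.ofReal_ofNat]
        exact gaussianReal_Ioi_self_le_half m v
    _ = ENNReal.ofReal (1 / 2 + -u / √(2 * π * v)) := by
        rw [add_comm,
          ENNReal.ofReal_add (by norm_num) (div_nonneg (neg_nonneg.2 hu) (sqrt_nonneg _))]

noncomputable def gaussianNoiseMultiplier (δ : ℝ) : ℝ := √(2 * log (1.25 / δ))

theorem one_fifth_lt_log_div {δ : ℝ} (hδ0 : 0 < δ) (hδ1 : δ < 1) : 1 / 5 < log (1.25 / δ) := by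
  have h := one_sub_inv_le_log_of_pos (x := 1.25 / δ) (by positivity)
  rw [inv_div] at h
  norm_num at h ⊢
  linarith

theorem exp_half_lt_two : exp (1 / 2) < 2 := by
  have h : exp (1 / 2) ^ 2 < 2 ^ 2 := by
    rw [← exp_nat_mul]; norm_num
    linarith [exp_one_lt_d9]
  exact lt_of_pow_lt_pow_left₀ 2 zero_le_two h

theorem gaussianNoiseMultiplier_pos {δ : ℝ} (hδ0 : 0 < δ) (hδ1 : δ < 1) :
    0 < gaussianNoiseMultiplier δ :=
  sqrt_pos.2 (by linarith [one_fifth_lt_log_div hδ0 hδ1])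

theorem gaussianReal_Ioi_noiseMultiplier_le {ε δ : ℝ} (hε1 : ε < 1) (hδ0 : 0 < δ) (hδ1 : δ < 1)
    (m : ℝ) {v : ℝ≥0} (hv : v ≠ 0) :
    gaussianReal m v (Ioi (m + √v * (gaussianNoiseMultiplier δ -
      ε / (2 * gaussianNoiseMultiplier δ)))) ≤ ENNReal.ofReal δ := by
  set L := log (1.25 / δ) with hL
  set s := gaussianNoiseMultiplier δ
  have hL5 : 1 / 5 < L := one_fifth_lt_log_div hδ0 hδ1
  have hs2 : s ^ 2 = 2 * L := sq_sqrt (by linarith)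
  have hs : 1 / 2 < s := by nlinarith [show 0 ≤ s from sqrt_nonneg _]
  have hexpL : exp (-L) = δ / 1.25 := by rw [hL, ← log_inv, inv_div, exp_log (by positivity)]
  set w := s - ε / (2 * s) with hw_def
  have hws : w * (2 * s) = 2 * s ^ 2 - ε := by rw [hw_def]; field_simp
  rcases le_or_gt 0 w with hw | hw
  · refine (gaussianReal_Ioi_add_le_exp (mul_nonneg (sqrt_nonneg _) hw) m hv).trans
      (ENNReal.ofReal_le_ofReal ?_)
    have hw2 : 2 * L - ε ≤ w ^ 2 := by
      have : w ^ 2 = s ^ 2 - ε + (ε / (2 * s)) ^ 2 := by rw [hw_def]; field_simp; ring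
      nlinarith [sq_nonneg (ε / (2 * s))]
    have hexp : exp (ε / 2) ≤ 5 / 2 :=
      (exp_le_exp.2 (by linarith)).trans (exp_half_lt_two.le.trans (by norm_num))
    calc exp (-(√v * w) ^ 2 / (2 * v)) / 2 = exp (-w ^ 2 / 2) / 2 := by
          rw [mul_pow, sq_sqrt (NNReal.coe_nonneg v)]; field_simp
      _ ≤ exp (ε / 2 + -L) / 2 := by gcongr; linarith
      _ = exp (ε / 2) * (δ / 1.25) / 2 := by rw [exp_add, hexpL]
      _ ≤ 5 / 2 * (δ / 1.25) / 2 := by gcongr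
      _ = δ := by ring
  · have hδ : 15 / 16 < δ := by
      have hL4 : L < 1 / 4 := by nlinarith
      have := add_one_le_exp (-L)
      rw [hexpL] at this
      norm_num at this
      linarith
    have hw5 : -(1 / 5) < w := by nlinarith
    refine (gaussianReal_Ioi_add_le_half_add
      (mul_nonpos_of_nonneg_of_nonpos (sqrt_nonneg _) hw.le) m hv).trans
        (ENNReal.ofReal_le_ofReal ?_)
    have hπ : 2 ≤ √(2 * π) := le_sqrt_of_sq_le (by nlinarith [pi_gt_three])
    calc 1 / 2 + -(√v * w) / √(2 * π * v) = 1 / 2 + -w / √(2 * π) := by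
          rw [sqrt_mul (by positivity) (v : ℝ)]
          field_simp
      _ ≤ 1 / 2 + (1 / 5) / 2 := by gcongr; linarith
      _ ≤ δ := by linarith

theorem gaussianReal_privacyLoss_gt_le {a b σ ε δ : ℝ} (hab : a ≠ b) (hσ0 : 0 < σ)
    (hε0 : 0 < ε) (hε1 : ε < 1) (hδ0 : 0 < δ) (hδ1 : δ < 1)
    (hσ : |a - b| / ε * gaussianNoiseMultiplier δ ≤ σ) :
    gaussianReal a (σ ^ 2).toNNReal {t | ε < gaussianPrivacyLoss a b (σ ^ 2).toNNReal t} ≤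
      ENNReal.ofReal δ := by
  have hv : (σ ^ 2).toNNReal ≠ 0 := (Real.toNNReal_pos.2 (by positivity)).ne'
  have hV : (NNReal.mk ((a - b) ^ 2) (sq_nonneg _) * (σ ^ 2).toNNReal) ≠ 0 :=
    mul_ne_zero (by simpa [← NNReal.coe_inj, sub_eq_zero] using hab) hv
  have hsqrtV :
      √((NNReal.mk ((a - b) ^ 2) (sq_nonneg _) * (σ ^ 2).toNNReal) : ℝ) = |a - b| * σ := by
    rw [NNReal.coe_mk, Real.coe_toNNReal _ (sq_nonneg σ), ← sq_abs, ← mul_pow,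
      sqrt_sq (by positivity)]
  rw [gaussianReal_privacyLoss_gt_eq a b ε hv]
  refine (measure_mono (Ioi_subset_Ioi ?_)).trans
    (gaussianReal_Ioi_noiseMultiplier_le hε1 hδ0 hδ1 0 hV)
  rw [zero_add, NNReal.coe_mul, hsqrtV, Real.coe_toNNReal _ (sq_nonneg σ), ← sq_abs (a - b)]
  set s := gaussianNoiseMultiplier δ
  have hs : 0 < s := gaussianNoiseMultiplier_pos hδ0 hδ1
  have hds : |a - b| * s ≤ σ * ε := by rwa [div_mul_eq_mul_div, div_le_iff₀ hε0] at hσ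
  have hgap : σ ^ 2 * ε - |a - b| ^ 2 / 2 - |a - b| * σ * (s - ε / (2 * s)) =
      (σ * ε - |a - b| * s) * (σ + |a - b| / (2 * s)) := by
    field_simp; ring
  rw [← sub_nonneg, hgap]
  exact mul_nonneg (sub_nonneg.2 hds) (by positivity)

theorem gaussianReal_le_exp_mul_add_of_noiseMultiplier_le {a b σ ε δ : ℝ} (hab : a ≠ b)
    (hε0 : 0 < ε) (hε1 : ε < 1) (hδ0 : 0 < δ) (hδ1 : δ < 1)
    (hσ : |a - b| / ε * gaussianNoiseMultiplier δ ≤ σ) (E : Set ℝ) :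
    gaussianReal a (σ ^ 2).toNNReal E ≤
      ENNReal.ofReal (exp ε) * gaussianReal b (σ ^ 2).toNNReal E + ENNReal.ofReal δ := by
  have hσ0 : 0 < σ := lt_of_lt_of_le (mul_pos (div_pos (abs_pos.2 (sub_ne_zero.2 hab)) hε0)
    (gaussianNoiseMultiplier_pos hδ0 hδ1)) hσ
  have hv : (σ ^ 2).toNNReal ≠ 0 := (Real.toNNReal_pos.2 (by positivity)).ne'
  refine (gaussianReal_le_exp_mul_add_privacyLoss a b ε hv E).trans ?_
  gcongr
  exact gaussianReal_privacyLoss_gt_le hab hσ0 hε0 hε1 hδ0 hδ1 hσ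

/-- The one-dimensional Gaussian mechanism `M(x) = f(x) + N(0, σ²)` with sensitivity Δ and
`σ ≥ (Δ/ε)·√(2 ln(1.25/δ))` satisfies (ε,δ)-differential privacy: the output distribution
of `M(x)` is the Gaussian measure centered at `f x` with variance σ². -/
theorem gaussian_mechanism_dp {X : Type*} (f : X → ℝ) (Δ ε δ σ : ℝ)
    (hΔ : ∀ x x', |f x - f x'| ≤ Δ)
    (hε0 : 0 < ε) (hε1 : ε < 1) (hδ0 : 0 < δ) (hδ1 : δ < 1)
    (hσ : σ ≥ Δ / ε * Real.sqrt (2 * Real.log (1.25 / δ))) :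
    ∀ (x x' : X) (E : Set ℝ), MeasurableSet E →
      gaussianReal (f x) (σ ^ 2).toNNReal E ≤
        ENNReal.ofReal (Real.exp ε) * gaussianReal (f x') (σ ^ 2).toNNReal E +
          ENNReal.ofReal δ := by
  intro x x' E _
  by_cases hxx : f x = f x'
  · rw [hxx]
    exact le_add_right (le_mul_of_one_le_left' (ENNReal.one_le_ofReal.2 (one_le_exp hε0.le)))
  refine gaussianReal_le_exp_mul_add_of_noiseMultiplier_le hxx hε0 hε1 hδ0 hδ1 (le_trans ?_ hσ) E
  exact mul_le_mul_of_nonneg_right (div_le_div_of_nonneg_right (hΔ x x') hε0.le)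
    (gaussianNoiseMultiplier_pos hδ0 hδ1).le
end
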